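/- (Sabidussi for vector chromatic number) For any nonempty simple graphs G and H, the vector chromatic number of the Cartesian product G □ H equals the maximum of the vector chromatic numbers of G and H. -/

import Mathlib

/-- The vector chromatic number: the infimum of real `k > 1` such that the vertices
can be assigned unit vectors with inner product at most `-1/(k-1)` on edges. -/
noncomputable def vecChrom {V : Type*} (G : SimpleGraph V) : ℝ :=
  sInf {k : ℝ | 1 < k ∧ ∃ (d : ℕ) (φ : V → EuclideanSpace ℝ (Fin d)),
    (∀ v, ‖φ v‖ = 1) ∧ ∀ u v, G.Adj u v → (inner ℝ (φ u) (φ v) : ℝ) ≤ -(1 / (k - 1))}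

/-!
Vector colorings pull back along graph homomorphisms, and both factors embed in `G □ H`, so
`χ_vec(G □ H) ≥ max (χ_vec G) (χ_vec H)`. Conversely, if `φ` and `ψ` are vector `k`-colorings of
`G` and `H`, then `(u, w) ↦ φ u ⊗ ψ w` is one of `G □ H`: along an edge one factor is constant
and contributes the inner product `1`. Hence `k`-colorability of `G □ H` is equivalent to that of
both factors; these sets of admissible `k` are up-sets of `ℝ`, nested and nonempty
(a regular simplex colors any finite graph), and the infimum of the smaller is the maximum.
-/
open scoped InnerProductSpace TensorProduct

section

variable {V W ι E F : Type*}
  [NormedAddCommGroup E] [InnerProductSpace ℝ E] [NormedAddCommGroup F] [InnerProductSpace ℝ F]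

def IsVecColoring (G : SimpleGraph V) (k : ℝ) (φ : V → E) : Prop :=
  (∀ v, ‖φ v‖ = 1) ∧ ∀ u v, G.Adj u v → ⟪φ u, φ v⟫_ℝ ≤ -(1 / (k - 1))

def VecColorable (G : SimpleGraph V) (k : ℝ) : Prop :=
  1 < k ∧ ∃ (d : ℕ) (φ : V → EuclideanSpace ℝ (Fin d)), IsVecColoring G k φ

lemma vecChrom_eq_sInf (G : SimpleGraph V) : vecChrom G = sInf {k | VecColorable G k} := rfl

namespace IsVecColoring

variable {G : SimpleGraph V} {k : ℝ} {φ : V → E}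

lemma comp_linearIsometry (hφ : IsVecColoring G k φ) (f : E →ₗᵢ[ℝ] F) :
    IsVecColoring G k (f ∘ φ) :=
  ⟨fun v => by simpa using hφ.1 v, fun u v huv => by simpa using hφ.2 u v huv⟩

lemma comap {G' : SimpleGraph W} (hφ : IsVecColoring G k φ) (f : G' →g G) :
    IsVecColoring G' k (φ ∘ f) :=
  ⟨fun v => hφ.1 (f v), fun _ _ huv => hφ.2 _ _ (f.map_adj huv)⟩

lemma mono (hφ : IsVecColoring G k φ) {k' : ℝ} (hk : 1 < k) (hkk' : k ≤ k') :
    IsVecColoring G k' φ := by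
  refine ⟨hφ.1, fun u v huv => (hφ.2 u v huv).trans ?_⟩
  gcongr

lemma vecColorable [FiniteDimensional ℝ E] (hφ : IsVecColoring G k φ) (hk : 1 < k) :
    VecColorable G k :=
  ⟨hk, _, _, hφ.comp_linearIsometry (stdOrthonormalBasis ℝ E).repr.toLinearIsometry⟩

lemma boxProd {H : SimpleGraph W} {ψ : W → F} (hφ : IsVecColoring G k φ)
    (hψ : IsVecColoring H k ψ) : IsVecColoring (G □ H) k fun p => φ p.1 ⊗ₜ[ℝ] ψ p.2 := by
  refine ⟨fun p => by simp [hφ.1, hψ.1], ?_⟩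
  rintro ⟨u, w⟩ ⟨u', w'⟩ (⟨huu', rfl⟩ | ⟨hww', rfl⟩)
  · simpa [hψ.1] using hφ.2 u u' huu'
  · simpa [hφ.1] using hψ.2 w w' hww'

end IsVecColoring

lemma Orthonormal.inner_sub_centroid [Fintype ι] [DecidableEq ι] {e : ι → E}
    (he : Orthonormal ℝ e) (i j : ι) :
    let c := ∑ l, (Fintype.card ι : ℝ)⁻¹ • e l
    ⟪e i - c, e j - c⟫_ℝ = (if i = j then 1 else 0) - (Fintype.card ι : ℝ)⁻¹ := by
  have hn : (Fintype.card ι : ℝ) ≠ 0 := by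
    have : Nonempty ι := ⟨i⟩
    positivity
  simp only [inner_sub_left, inner_sub_right, he.inner_right_fintype, he.inner_left_fintype,
    he.inner_sum, orthonormal_iff_ite.mp he, conj_trivial, Finset.sum_const, Finset.card_univ,
    nsmul_eq_mul]
  field_simp
  ring

-- The vertices of a regular simplex: the standard basis, centred and rescaled to unit length.
variable (ι) in
lemma exists_isVecColoring_top [Fintype ι] [Nontrivial ι] :
    ∃ φ : ι → EuclideanSpace ℝ ι, IsVecColoring (⊤ : SimpleGraph ι) (Fintype.card ι) φ := by
  classical
  set n : ℝ := ((Fintype.card ι : ℕ) : ℝ)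
  have hn : 1 < n := Nat.one_lt_cast.mpr Fintype.one_lt_card
  have hn1 : n - 1 ≠ 0 := by linarith
  set e := EuclideanSpace.basisFun ι ℝ
  set c := ∑ l, n⁻¹ • e l
  have hinner (i j : ι) : ⟪√(n / (n - 1)) • (e i - c), √(n / (n - 1)) • (e j - c)⟫_ℝ
      = n / (n - 1) * ((if i = j then 1 else 0) - n⁻¹) := by
    rw [real_inner_smul_left, real_inner_smul_right, ← mul_assoc,
      Real.mul_self_sqrt (div_nonneg (by linarith) (by linarith)),
      e.orthonormal.inner_sub_centroid]
  refine ⟨fun i => √(n / (n - 1)) • (e i - c), fun i => ?_, fun i j hij => le_of_eq ?_⟩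
  · rw [norm_eq_sqrt_real_inner, hinner, if_pos rfl, Real.sqrt_eq_one]
    field_simp
  · rw [hinner, if_neg hij.ne, zero_sub]
    field_simp

lemma vecColorable_card_add_one [Fintype V] [Nonempty V] (G : SimpleGraph V) :
    VecColorable G (Fintype.card V + 1) := by
  obtain ⟨φ, hφ⟩ := exists_isVecColoring_top (Option V)
  rw [Fintype.card_option, Nat.cast_succ] at hφ
  have f : G →g ⊤ := ⟨some, fun huv => by simpa using huv.ne⟩
  exact (hφ.comap f).vecColorable (by simpa using Fintype.card_pos)

namespace VecColorable

variable {G : SimpleGraph V} {k : ℝ}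

lemma mono (h : VecColorable G k) {k' : ℝ} (hkk' : k ≤ k') : VecColorable G k' :=
  let ⟨hk, _, _, hφ⟩ := h
  ⟨hk.trans_le hkk', _, _, hφ.mono hk hkk'⟩

lemma comap {G' : SimpleGraph W} (h : VecColorable G k) (f : G' →g G) : VecColorable G' k :=
  let ⟨hk, _, _, hφ⟩ := h
  ⟨hk, _, _, hφ.comap f⟩

lemma boxProd {H : SimpleGraph W} (hG : VecColorable G k) (hH : VecColorable H k) :
    VecColorable (G □ H) k :=
  let ⟨hk, _, _, hφ⟩ := hG
  let ⟨_, _, _, hψ⟩ := hH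
  (hφ.boxProd hψ).vecColorable hk

end VecColorable

lemma vecColorable_boxProd_iff [Nonempty V] [Nonempty W] {G : SimpleGraph V} {H : SimpleGraph W}
    {k : ℝ} : VecColorable (G □ H) k ↔ VecColorable G k ∧ VecColorable H k :=
  ⟨fun h => ⟨h.comap (SimpleGraph.boxProdLeft G H (Classical.arbitrary W)).toHom,
      h.comap (SimpleGraph.boxProdRight G H (Classical.arbitrary V)).toHom⟩,
    fun ⟨hG, hH⟩ => hG.boxProd hH⟩

lemma isUpperSet_setOf_vecColorable (G : SimpleGraph V) : IsUpperSet {k | VecColorable G k} :=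
  fun _ _ hkk' h => h.mono hkk'

lemma bddBelow_setOf_vecColorable (G : SimpleGraph V) : BddBelow {k | VecColorable G k} :=
  ⟨1, fun _ h => h.1.le⟩

lemma csInf_inter_of_isUpperSet {α : Type*} [ConditionallyCompleteLinearOrder α] {s t : Set α}
    (hs : IsUpperSet s) (ht : IsUpperSet t) (hs₀ : s.Nonempty) (ht₀ : t.Nonempty)
    (hs₁ : BddBelow s) (ht₁ : BddBelow t) : sInf (s ∩ t) = max (sInf s) (sInf t) := by
  rcases hs.total ht with hst | hts
  · rw [Set.inter_eq_left.mpr hst, max_eq_left (csInf_le_csInf ht₁ hs₀ hst)]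
  · rw [Set.inter_eq_right.mpr hts, max_eq_right (csInf_le_csInf hs₁ ht₀ hts)]

end

/-- Sabidussi's theorem for the vector chromatic number. -/
theorem stmt10 {U W : Type*} [Fintype U] [Fintype W] [Nonempty U] [Nonempty W]
    (G : SimpleGraph U) (H : SimpleGraph W) :
    vecChrom (G.boxProd H) = max (vecChrom G) (vecChrom H) := by
  simp only [vecChrom_eq_sInf, vecColorable_boxProd_iff, Set.ofPred_and]
  exact csInf_inter_of_isUpperSet (isUpperSet_setOf_vecColorable G)
    (isUpperSet_setOf_vecColorable H) ⟨_, vecColorable_card_add_one G⟩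
    ⟨_, vecColorable_card_add_one H⟩ (bddBelow_setOf_vecColorable G)
    (bddBelow_setOf_vecColorable H)
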